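/- For every odd integer Δ with Δ = 9 or Δ ≥ 11, there exists a 4-γ_t-critical graph G of order Δ + 4 with maximum degree Δ(G) = Δ and minimum degree δ(G) ≥ 2. -/

import Mathlib

/-
With `n = Δ + 4`, take a hub `h` joined to every vertex except those of a path `p q r`. The other
vertices split between `p` (the vertices `s₁, s₂, xᵢ`) and `r` (the vertices `t₁, t₂, t₃, yᵢ`),
and the `xᵢ, yᵢ` span a complete bipartite graph minus the perfect matching `xᵢ yᵢ`.
A total dominating set contains `p` or `r` (to dominate `q`), and `p, r` have no common neighbour
besides `q`. In a set of three vertices, dominating the `tⱼ` (when `p` is chosen) or the `sⱼ` (when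
`r` is) forces in some `xᵢ` or `yᵢ`, and then `t₁` or the matching partner of that vertex is left
undominated; so `γₜ ≥ 4`, while `{p, q, r, t₁}` is total dominating. Deleting any single vertex
leaves a graph totally dominated by three vertices. The hub has degree `n - 4`, and every other
vertex misses at least three others.
-/

open scoped Classical

namespace SimpleGraph

variable {V : Type*}

/-- A set `S` is a total dominating set if every vertex is adjacent to a vertex of `S`. -/
def IsTotalDomSet (G : SimpleGraph V) (S : Set V) : Prop :=
  ∀ v : V, ∃ u ∈ S, G.Adj v u

/-- The total domination number: minimum cardinality of a total dominating set. -/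
noncomputable def totalDomNum (G : SimpleGraph V) [Fintype V] : ℕ :=
  sInf {n : ℕ | ∃ S : Finset V, G.IsTotalDomSet ↑S ∧ S.card = n}

/-- The graph obtained by deleting the vertex `v`. -/
def deleteVert (G : SimpleGraph V) (v : V) : SimpleGraph {u : V // u ≠ v} :=
  G.induce {u : V | u ≠ v}

/-- A support vertex is a vertex adjacent to a leaf (a vertex of degree one). -/
noncomputable def IsSupportVertex (G : SimpleGraph V) [Fintype V] (v : V) : Prop :=
  ∃ u : V, G.Adj v u ∧ G.degree u = 1

/-- `G` is total domination vertex critical: it has no isolated vertex and deleting any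
vertex that is not a support vertex decreases the total domination number. -/
noncomputable def IsTotalDomCritical (G : SimpleGraph V) [Fintype V] : Prop :=
  (∀ v : V, 0 < G.degree v) ∧
  ∀ v : V, ¬ G.IsSupportVertex v →
    (G.deleteVert v).totalDomNum < G.totalDomNum

open Finset

theorem _root_.Finset.eq_of_card_le_three {α : Type*} [DecidableEq α] {s : Finset α} {a b c : α}
    (hs : #s ≤ 3) (ha : a ∈ s) (hb : b ∈ s) (hc : c ∈ s) (hab : a ≠ b) (hac : a ≠ c)
    (hbc : b ≠ c) : s = {a, b, c} := by
  refine (eq_of_subset_of_card_le (by simp [insert_subset_iff, ha, hb, hc]) ?_).symm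
  rwa [card_eq_three.2 ⟨a, b, c, hab, hac, hbc, rfl⟩]

section TotalDomination

variable {G : SimpleGraph V}

theorem isTotalDomSet_insert_of_adj [DecidableEq V] {S : Finset V} {v u : V}
    (hS : ∀ w, w ≠ v → ∃ x ∈ S, G.Adj w x) (hvu : G.Adj v u) :
    G.IsTotalDomSet ↑(insert u S) := by
  intro w
  by_cases hw : w = v
  · exact ⟨u, by simp, hw ▸ hvu⟩
  · obtain ⟨x, hx, hwx⟩ := hS w hw
    exact ⟨x, by simp [hx], hwx⟩

variable [Fintype V]

theorem totalDomNum_le_card {S : Finset V} (hS : G.IsTotalDomSet S) : G.totalDomNum ≤ #S :=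
  Nat.sInf_le ⟨S, hS, rfl⟩

theorem le_totalDomNum {k : ℕ} {S : Finset V} (hS : G.IsTotalDomSet S)
    (h : ∀ T : Finset V, G.IsTotalDomSet T → k ≤ #T) : k ≤ G.totalDomNum :=
  le_csInf ⟨_, S, hS, rfl⟩ fun _ ⟨T, hT, hm⟩ => hm ▸ h T hT

theorem totalDomNum_deleteVert_le {S : Finset V} {v : V} (hv : v ∉ S)
    (hS : ∀ w, w ≠ v → ∃ x ∈ S, G.Adj w x) : (G.deleteVert v).totalDomNum ≤ #S := by
  have hcard : #(S.subtype (· ≠ v)) = #S := by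
    rw [card_subtype, filter_true_of_mem fun x hx => ne_of_mem_of_not_mem hx hv]
  refine hcard ▸ totalDomNum_le_card fun w => ?_
  obtain ⟨x, hx, hwx⟩ := hS w w.2
  exact ⟨⟨x, ne_of_mem_of_not_mem hx hv⟩, by simpa using hx, hwx⟩

end TotalDomination

section Degree

variable [Fintype V] {G : SimpleGraph V} [DecidableRel G.Adj] {v : V}

theorem degree_le_card_sub_card {t : Finset V} (ht : ∀ w ∈ t, ¬G.Adj v w) :
    G.degree v ≤ Fintype.card V - #t := by
  rw [← card_neighborFinset_eq_degree, ← card_compl]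
  exact card_le_card fun w hw => mem_compl.2 fun hwt => ht w hwt ((mem_neighborFinset ..).1 hw)

theorem card_sub_card_le_degree {t : Finset V} (ht : ∀ w ∉ t, G.Adj v w) :
    Fintype.card V - #t ≤ G.degree v := by
  rw [← card_neighborFinset_eq_degree, ← card_compl]
  exact card_le_card fun w hw => (mem_neighborFinset ..).2 (ht w (mem_compl.1 hw))

theorem two_le_degree {a b : V} (hab : a ≠ b) (ha : G.Adj v a) (hb : G.Adj v b) :
    2 ≤ G.degree v := by
  rw [← card_neighborFinset_eq_degree]
  exact one_lt_card.2 ⟨a, by simpa, b, by simpa, hab⟩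

end Degree

namespace CriticalFamily

/-! The vertex codes: `0` is a hub `h`, `1, 2, 3` form a path `p q r`, `4, 5` are
`s₁, s₂` and `6, 7, 8` are `t₁, t₂, t₃`; the codes `≥ 9` come in pairs `xᵢ = 2i + 9`,
`yᵢ = 2i + 10`, with `xᵢ ~ yⱼ` exactly when `i ≠ j`. -/

def IsX (v : ℕ) : Prop := 9 ≤ v ∧ v % 2 = 1

def IsY (v : ℕ) : Prop := 9 ≤ v ∧ v % 2 = 0

def Edge (u v : ℕ) : Prop :=
  u = 0 ∧ 4 ≤ v ∨
  u = 1 ∧ (v = 2 ∨ v = 4 ∨ v = 5 ∨ IsX v) ∨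
  u = 2 ∧ v = 3 ∨
  u = 3 ∧ (v = 6 ∨ v = 7 ∨ v = 8 ∨ IsY v) ∨
  u = 4 ∧ (v = 7 ∨ IsY v) ∨
  u = 5 ∧ (v = 6 ∨ IsY v) ∨
  u = 6 ∧ (v = 7 ∨ IsX v) ∨
  u = 7 ∧ IsX v ∨
  u = 8 ∧ IsY v ∨
  IsX u ∧ IsY v ∧ v ≠ u + 1

def codeGraph : SimpleGraph ℕ := fromRel Edge

def graph (n : ℕ) : SimpleGraph (Fin n) := codeGraph.comap Fin.val

section Neighbourhoods

variable {v w : ℕ}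

theorem adj_zero_iff : codeGraph.Adj 0 w ↔ 4 ≤ w := by
  simp [codeGraph, Edge, IsX, IsY]; omega

theorem adj_one_iff : codeGraph.Adj 1 w ↔ w = 2 ∨ w = 4 ∨ w = 5 ∨ IsX w := by
  simp [codeGraph, Edge, IsX, IsY]; omega

theorem adj_two_iff : codeGraph.Adj 2 w ↔ w = 1 ∨ w = 3 := by
  simp [codeGraph, Edge, IsX, IsY]; omega

theorem adj_three_iff : codeGraph.Adj 3 w ↔ w = 2 ∨ w = 6 ∨ w = 7 ∨ w = 8 ∨ IsY w := by
  simp [codeGraph, Edge, IsX, IsY]; omega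

theorem adj_four_iff : codeGraph.Adj 4 w ↔ w = 0 ∨ w = 1 ∨ w = 7 ∨ IsY w := by
  simp [codeGraph, Edge, IsX, IsY]; omega

theorem adj_five_iff : codeGraph.Adj 5 w ↔ w = 0 ∨ w = 1 ∨ w = 6 ∨ IsY w := by
  simp [codeGraph, Edge, IsX, IsY]; omega

theorem adj_six_iff : codeGraph.Adj 6 w ↔ w = 0 ∨ w = 3 ∨ w = 5 ∨ w = 7 ∨ IsX w := by
  simp [codeGraph, Edge, IsX, IsY]; omega

theorem adj_seven_iff : codeGraph.Adj 7 w ↔ w = 0 ∨ w = 3 ∨ w = 4 ∨ w = 6 ∨ IsX w := by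
  simp [codeGraph, Edge, IsX, IsY]; omega

theorem adj_eight_iff : codeGraph.Adj 8 w ↔ w = 0 ∨ w = 3 ∨ IsY w := by
  simp [codeGraph, Edge, IsX, IsY]; omega

theorem adj_of_isX_iff (hv : IsX v) :
    codeGraph.Adj v w ↔ w = 0 ∨ w = 1 ∨ w = 6 ∨ w = 7 ∨ IsY w ∧ w ≠ v + 1 := by
  obtain ⟨hv9, hv2⟩ := hv
  have : v ≠ 0 ∧ v ≠ 1 ∧ v ≠ 2 ∧ v ≠ 3 ∧ v ≠ 4 ∧ v ≠ 5 ∧ v ≠ 6 ∧ v ≠ 7 ∧ v ≠ 8 := by omega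
  simp [codeGraph, Edge, IsX, IsY, this, hv9, hv2]; omega

theorem adj_of_isY_iff (hv : IsY v) :
    codeGraph.Adj v w ↔ w = 0 ∨ w = 3 ∨ w = 4 ∨ w = 5 ∨ w = 8 ∨ IsX w ∧ w + 1 ≠ v := by
  obtain ⟨hv9, hv2⟩ := hv
  have : v ≠ 0 ∧ v ≠ 1 ∧ v ≠ 2 ∧ v ≠ 3 ∧ v ≠ 4 ∧ v ≠ 5 ∧ v ≠ 6 ∧ v ≠ 7 ∧ v ≠ 8 := by omega
  simp [codeGraph, Edge, IsX, IsY, this, hv9, hv2]; omega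

end Neighbourhoods

variable {n : ℕ}

theorem four_le_card_of_dominating_of_two_mem (h9 : 9 ≤ n) {s : Finset ℕ}
    (hlt : ∀ a ∈ s, a < n) (hdom : ∀ w < n, ∃ a ∈ s, codeGraph.Adj w a) (hq : 2 ∈ s) :
    4 ≤ #s := by
  by_contra! h3
  obtain ⟨a, has, hpr⟩ := hdom 2 (by omega)
  obtain ⟨b, hbs, hb⟩ := hdom 0 (by omega)
  rw [adj_two_iff] at hpr
  rw [adj_zero_iff] at hb
  have hbn := hlt b hbs
  have hs := eq_of_card_le_three (by omega) hq has hbs (by omega) (by omega) (by omega)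
  have hdom' (w) (hw : w < n) :
      codeGraph.Adj w 2 ∨ codeGraph.Adj w a ∨ codeGraph.Adj w b := by
    simpa [hs] using hdom w hw
  rcases hpr with rfl | rfl
  · -- `t₃` forces `b` to be a `yᵢ`, and then nothing dominates `t₁`
    have h8 := hdom' 8 (by omega)
    have h6 := hdom' 6 (by omega)
    simp only [adj_eight_iff, adj_six_iff, IsX, IsY] at h8 h6
    omega
  · -- `s₁` and `s₂` force `b = yᵢ`, and then nothing dominates `xᵢ = b - 1`
    have h4 := hdom' 4 (by omega)
    have h5 := hdom' 5 (by omega)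
    simp only [adj_four_iff, adj_five_iff, IsY] at h4 h5
    have hx := hdom' (b - 1) (by omega)
    simp only [adj_of_isX_iff (show IsX (b - 1) by unfold IsX; omega), IsY] at hx
    omega

theorem four_le_card_of_dominating_of_two_notMem (hn : n % 2 = 1) (h9 : 9 ≤ n)
    {s : Finset ℕ} (hlt : ∀ a ∈ s, a < n) (hdom : ∀ w < n, ∃ a ∈ s, codeGraph.Adj w a)
    (hq : 2 ∉ s) : 4 ≤ #s := by
  by_contra! h3
  obtain ⟨a, has, hpr⟩ := hdom 2 (by omega)
  obtain ⟨c, hcs, hc⟩ := hdom 1 (by omega)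
  obtain ⟨d, hds, hd⟩ := hdom 3 (by omega)
  rw [adj_two_iff] at hpr
  simp only [adj_one_iff, adj_three_iff, IsX, IsY] at hc hd
  have hc2 : c ≠ 2 := ne_of_mem_of_not_mem hcs hq
  have hd2 : d ≠ 2 := ne_of_mem_of_not_mem hds hq
  have hcn := hlt c hcs
  have hdn := hlt d hds
  have hs := eq_of_card_le_three (by omega) has hcs hds (by omega) (by omega) (by omega)
  have hdom' (w) (hw : w < n) :
      codeGraph.Adj w a ∨ codeGraph.Adj w c ∨ codeGraph.Adj w d := by
    simpa [hs] using hdom w hw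
  rcases hpr with rfl | rfl
  · -- `t₁, t₂, t₃` force `c = xᵢ`, and then nothing dominates `yᵢ = c + 1`
    have h6 := hdom' 6 (by omega)
    have h7 := hdom' 7 (by omega)
    have h8 := hdom' 8 (by omega)
    simp only [adj_six_iff, adj_seven_iff, adj_eight_iff, IsX, IsY] at h6 h7 h8
    have hy := hdom' (c + 1) (by omega)
    simp only [adj_of_isY_iff (show IsY (c + 1) by unfold IsY; omega), IsX] at hy
    omega
  · -- `s₁` and `s₂` force `d = yᵢ`, and then nothing dominates `xᵢ = d - 1`
    have h4 := hdom' 4 (by omega)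
    have h5 := hdom' 5 (by omega)
    simp only [adj_four_iff, adj_five_iff, IsY] at h4 h5
    have hx := hdom' (d - 1) (by omega)
    simp only [adj_of_isX_iff (show IsX (d - 1) by unfold IsX; omega), IsY] at hx
    omega

theorem four_le_card_of_dominating (hn : n % 2 = 1) (h9 : 9 ≤ n) {s : Finset ℕ}
    (hlt : ∀ a ∈ s, a < n) (hdom : ∀ w < n, ∃ a ∈ s, codeGraph.Adj w a) : 4 ≤ #s := by
  by_cases hq : 2 ∈ s
  · exact four_le_card_of_dominating_of_two_mem h9 hlt hdom hq
  · exact four_le_card_of_dominating_of_two_notMem hn h9 hlt hdom hq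

theorem four_le_card_of_isTotalDomSet (hn : n % 2 = 1) (h9 : 9 ≤ n) {S : Finset (Fin n)}
    (hS : (graph n).IsTotalDomSet S) : 4 ≤ #S := by
  rw [← card_map Fin.valEmbedding]
  refine four_le_card_of_dominating hn h9 (fun a ha => ?_) fun w hw => ?_
  · obtain ⟨u, -, rfl⟩ := mem_map.1 ha
    exact u.2
  · obtain ⟨u, hu, hwu⟩ := hS ⟨w, hw⟩
    exact ⟨u, mem_map_of_mem _ hu, hwu⟩

theorem exists_adj_of_dominating_triple {v : Fin n} (a b c : ℕ) (hlt : a < n ∧ b < n ∧ c < n)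
    (hdom : ∀ w < n, w ≠ v → codeGraph.Adj a w ∨ codeGraph.Adj b w ∨ codeGraph.Adj c w) :
    ∀ w, w ≠ v → ∃ u ∈ ({⟨a, hlt.1⟩, ⟨b, hlt.2.1⟩, ⟨c, hlt.2.2⟩} : Finset (Fin n)),
      (graph n).Adj w u := by
  intro w hw
  simp only [mem_insert, mem_singleton, exists_eq_or_imp, exists_eq_left]
  simpa only [graph, comap_adj, codeGraph.adj_comm w] using hdom w w.2 (Fin.val_ne_of_ne hw)

theorem totalDomNum_deleteVert_le_three_of_dominating {v : ℕ} (hvn : v < n) (a b c : ℕ)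
    (hlt : a < n ∧ b < n ∧ c < n) (hv : a ≠ v ∧ b ≠ v ∧ c ≠ v)
    (hdom : ∀ w < n, w ≠ v → codeGraph.Adj a w ∨ codeGraph.Adj b w ∨ codeGraph.Adj c w) :
    ((graph n).deleteVert ⟨v, hvn⟩).totalDomNum ≤ 3 :=
  (totalDomNum_deleteVert_le (by simp [Fin.ext_iff]; omega)
    (exists_adj_of_dominating_triple a b c hlt hdom)).trans card_le_three

theorem adj_one_or_two_or_three {w : ℕ} (hw : w ≠ 0) :
    codeGraph.Adj 1 w ∨ codeGraph.Adj 2 w ∨ codeGraph.Adj 3 w := by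
  simp only [adj_one_iff, adj_two_iff, adj_three_iff, IsX, IsY]
  omega

theorem totalDomNum_graph (hn : n % 2 = 1) (h9 : 9 ≤ n) : (graph n).totalDomNum = 4 := by
  have hS := isTotalDomSet_insert_of_adj
    (exists_adj_of_dominating_triple (v := ⟨0, by omega⟩) 1 2 3 (by omega)
      fun w _ hw => adj_one_or_two_or_three hw)
    (show (graph n).Adj ⟨0, by omega⟩ ⟨6, by omega⟩ from adj_zero_iff.2 (by simp))
  exact le_antisymm ((totalDomNum_le_card hS).trans card_le_four)
    (le_totalDomNum hS fun _ => four_le_card_of_isTotalDomSet hn h9)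

theorem totalDomNum_deleteVert_le_three_of_lt_nine (h13 : 13 ≤ n) {v : ℕ} (hvn : v < n)
    (hv : v < 9) : ((graph n).deleteVert ⟨v, hvn⟩).totalDomNum ≤ 3 := by
  have hx9 : IsX 9 := ⟨le_rfl, rfl⟩
  have hy10 : IsY 10 := ⟨by norm_num, rfl⟩
  interval_cases v
  · exact totalDomNum_deleteVert_le_three_of_dominating hvn 1 2 3 (by omega) (by omega)
      fun w _ hw => adj_one_or_two_or_three hw
  · refine totalDomNum_deleteVert_le_three_of_dominating hvn 0 3 10 (by omega) (by omega) ?_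
    simp only [adj_zero_iff, adj_three_iff, adj_of_isY_iff hy10, IsX, IsY]
    omega
  · refine totalDomNum_deleteVert_le_three_of_dominating hvn 0 9 10 (by omega) (by omega) ?_
    simp only [adj_zero_iff, adj_of_isX_iff hx9, adj_of_isY_iff hy10, IsX, IsY]
    omega
  · refine totalDomNum_deleteVert_le_three_of_dominating hvn 0 1 9 (by omega) (by omega) ?_
    simp only [adj_zero_iff, adj_one_iff, adj_of_isX_iff hx9, IsX, IsY]
    omega
  · refine totalDomNum_deleteVert_le_three_of_dominating hvn 3 5 6 (by omega) (by omega) ?_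
    simp only [adj_three_iff, adj_five_iff, adj_six_iff, IsX, IsY]
    omega
  · refine totalDomNum_deleteVert_le_three_of_dominating hvn 3 4 7 (by omega) (by omega) ?_
    simp only [adj_three_iff, adj_four_iff, adj_seven_iff, IsX, IsY]
    omega
  · refine totalDomNum_deleteVert_le_three_of_dominating hvn 1 4 10 (by omega) (by omega) ?_
    simp only [adj_one_iff, adj_four_iff, adj_of_isY_iff hy10, IsX, IsY]
    omega
  · refine totalDomNum_deleteVert_le_three_of_dominating hvn 1 5 10 (by omega) (by omega) ?_
    simp only [adj_one_iff, adj_five_iff, adj_of_isY_iff hy10, IsX, IsY]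
    omega
  · refine totalDomNum_deleteVert_le_three_of_dominating hvn 1 5 6 (by omega) (by omega) ?_
    simp only [adj_one_iff, adj_five_iff, adj_six_iff, IsX, IsY]
    omega

theorem totalDomNum_deleteVert_le_three_of_nine_le (hn : n % 2 = 1) (h13 : 13 ≤ n) {v : ℕ}
    (hvn : v < n) (hv : 9 ≤ v) : ((graph n).deleteVert ⟨v, hvn⟩).totalDomNum ≤ 3 := by
  have hx9 : IsX 9 := ⟨le_rfl, rfl⟩
  have hy10 : IsY 10 := ⟨by norm_num, rfl⟩
  have hy12 : IsY 12 := ⟨by norm_num, rfl⟩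
  obtain hvx | rfl | hvy : IsX v ∨ v = 10 ∨ (IsY v ∧ 12 ≤ v) := by unfold IsX IsY; omega
  · refine totalDomNum_deleteVert_le_three_of_dominating hvn 3 4 (v + 1)
      (by unfold IsX at hvx; omega) (by omega) ?_
    simp only [adj_three_iff, adj_four_iff,
      adj_of_isY_iff (show IsY (v + 1) by unfold IsX IsY at *; omega), IsX, IsY] at hvx ⊢
    omega
  · refine totalDomNum_deleteVert_le_three_of_dominating hvn 1 9 12 (by omega) (by omega) ?_
    simp only [adj_one_iff, adj_of_isX_iff hx9, adj_of_isY_iff hy12, IsX, IsY]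
    omega
  · refine totalDomNum_deleteVert_le_three_of_dominating hvn 1 (v - 1) 10 (by omega) (by omega) ?_
    simp only [adj_one_iff, adj_of_isX_iff (show IsX (v - 1) by unfold IsX IsY at *; omega),
      adj_of_isY_iff hy10, IsX, IsY] at hvy ⊢
    omega

theorem totalDomNum_deleteVert_graph_le_three (hn : n % 2 = 1) (h13 : 13 ≤ n) (v : Fin n) :
    ((graph n).deleteVert v).totalDomNum ≤ 3 := by
  obtain ⟨v, hvn⟩ := v
  obtain hv | hv := lt_or_ge v 9
  · exact totalDomNum_deleteVert_le_three_of_lt_nine h13 hvn hv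
  · exact totalDomNum_deleteVert_le_three_of_nine_le hn h13 hvn hv

theorem degree_graph_le_of_nonadj {v : ℕ} (hvn : v < n) (a b c : ℕ)
    (hlt : a < n ∧ b < n ∧ c < n) (hne : [v, a, b, c].Nodup)
    (hnadj : ¬codeGraph.Adj v a ∧ ¬codeGraph.Adj v b ∧ ¬codeGraph.Adj v c) :
    (graph n).degree ⟨v, hvn⟩ ≤ n - 4 := by
  let l : List (Fin n) := [⟨v, hvn⟩, ⟨a, hlt.1⟩, ⟨b, hlt.2.1⟩, ⟨c, hlt.2.2⟩]
  have hcard : #l.toFinset = 4 := List.toFinset_card_of_nodup (List.Nodup.of_map Fin.val hne)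
  have hl : ∀ w ∈ l.toFinset, ¬(graph n).Adj ⟨v, hvn⟩ w := by
    simp only [l, List.mem_toFinset, List.mem_cons, List.not_mem_nil, or_false]
    rintro w (rfl | rfl | rfl | rfl)
    exacts [(graph n).irrefl, hnadj.1, hnadj.2.1, hnadj.2.2]
  simpa [hcard] using degree_le_card_sub_card hl

theorem degree_graph_le (hn : n % 2 = 1) (h9 : 9 ≤ n) (v : Fin n) :
    (graph n).degree v ≤ n - 4 := by
  obtain ⟨v, hvn⟩ := v
  obtain hv | hvx | hvy : v < 9 ∨ IsX v ∨ IsY v := by unfold IsX IsY; omega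
  · interval_cases v
    · exact degree_graph_le_of_nonadj hvn 1 2 3 (by omega) (by simp)
        (by simp only [adj_zero_iff]; omega)
    · exact degree_graph_le_of_nonadj hvn 0 3 6 (by omega) (by simp)
        (by simp only [adj_one_iff, IsX]; omega)
    · exact degree_graph_le_of_nonadj hvn 0 4 5 (by omega) (by simp)
        (by simp only [adj_two_iff]; omega)
    · exact degree_graph_le_of_nonadj hvn 0 1 4 (by omega) (by simp)
        (by simp only [adj_three_iff, IsY]; omega)
    · exact degree_graph_le_of_nonadj hvn 2 3 5 (by omega) (by simp)
        (by simp only [adj_four_iff, IsY]; omega)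
    · exact degree_graph_le_of_nonadj hvn 2 3 4 (by omega) (by simp)
        (by simp only [adj_five_iff, IsY]; omega)
    · exact degree_graph_le_of_nonadj hvn 1 2 4 (by omega) (by simp)
        (by simp only [adj_six_iff, IsX]; omega)
    · exact degree_graph_le_of_nonadj hvn 1 2 5 (by omega) (by simp)
        (by simp only [adj_seven_iff, IsX]; omega)
    · exact degree_graph_le_of_nonadj hvn 1 2 4 (by omega) (by simp)
        (by simp only [adj_eight_iff, IsY]; omega)
  · refine degree_graph_le_of_nonadj hvn 2 3 (v + 1) (by unfold IsX at hvx; omega)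
      (by unfold IsX at hvx; simp; omega) ?_
    simp only [adj_of_isX_iff hvx, IsY]
    unfold IsX at hvx
    omega
  · refine degree_graph_le_of_nonadj hvn 1 2 (v - 1) (by omega)
      (by unfold IsY at hvy; simp; omega) ?_
    simp only [adj_of_isY_iff hvy, IsX]
    unfold IsY at hvy
    omega

theorem two_le_degree_graph_of_adj {v : ℕ} (hvn : v < n) (a b : ℕ) (hlt : a < n ∧ b < n)
    (hab : a ≠ b) (hadj : codeGraph.Adj a v ∧ codeGraph.Adj b v) :
    2 ≤ (graph n).degree ⟨v, hvn⟩ :=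
  two_le_degree (a := ⟨a, hlt.1⟩) (b := ⟨b, hlt.2⟩) (by simpa [Fin.ext_iff]) hadj.1.symm
    hadj.2.symm

theorem two_le_degree_graph (h9 : 9 ≤ n) (v : Fin n) : 2 ≤ (graph n).degree v := by
  obtain ⟨v, hvn⟩ := v
  obtain rfl | rfl | rfl | rfl | hv | hv :
      v = 0 ∨ v = 1 ∨ v = 2 ∨ v = 3 ∨ (4 ≤ v ∧ (v = 4 ∨ v = 5 ∨ IsX v)) ∨
        (4 ≤ v ∧ (v = 6 ∨ v = 7 ∨ v = 8 ∨ IsY v)) := by unfold IsX IsY; omega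
  · exact two_le_degree_graph_of_adj hvn 4 5 (by omega) (by omega)
      ⟨adj_four_iff.2 (by simp), adj_five_iff.2 (by simp)⟩
  · exact two_le_degree_graph_of_adj hvn 2 4 (by omega) (by omega)
      ⟨adj_two_iff.2 (by simp), adj_four_iff.2 (by simp)⟩
  · exact two_le_degree_graph_of_adj hvn 1 3 (by omega) (by omega)
      ⟨adj_one_iff.2 (by simp), adj_three_iff.2 (by simp)⟩
  · exact two_le_degree_graph_of_adj hvn 2 6 (by omega) (by omega)
      ⟨adj_two_iff.2 (by simp), adj_six_iff.2 (by simp)⟩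
  · exact two_le_degree_graph_of_adj hvn 0 1 (by omega) (by omega)
      ⟨adj_zero_iff.2 hv.1, adj_one_iff.2 (by tauto)⟩
  · exact two_le_degree_graph_of_adj hvn 0 3 (by omega) (by omega)
      ⟨adj_zero_iff.2 hv.1, adj_three_iff.2 (by tauto)⟩

theorem sub_four_le_degree_graph_zero (h4 : 4 ≤ n) :
    n - 4 ≤ (graph n).degree ⟨0, by omega⟩ := by
  let t : Finset (Fin n) := {⟨0, by omega⟩, ⟨1, by omega⟩, ⟨2, by omega⟩, ⟨3, by omega⟩}
  have ht : ∀ w ∉ t, (graph n).Adj ⟨0, by omega⟩ w := fun w hw =>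
    adj_zero_iff.2 (by simp [t, Fin.ext_iff] at hw; omega)
  calc n - 4 ≤ n - #t := Nat.sub_le_sub_left card_le_four n
    _ ≤ _ := by simpa using card_sub_card_le_degree ht

theorem maxDegree_graph (hn : n % 2 = 1) (h9 : 9 ≤ n) : (graph n).maxDegree = n - 4 :=
  le_antisymm (maxDegree_le_of_forall_degree_le _ _ (degree_graph_le hn h9))
    ((sub_four_le_degree_graph_zero (by omega)).trans (degree_le_maxDegree _ _))

end CriticalFamily

open CriticalFamily

/-- for every odd `Δ` with `Δ = 9` or `Δ ≥ 11`, there is a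
`4`-`γₜ`-critical graph of order `Δ + 4` with maximum degree `Δ` and `δ(G) ≥ 2`. -/
theorem stmt16 (Δ : ℕ) (hodd : Odd Δ) (hΔ : Δ = 9 ∨ 11 ≤ Δ) :
    ∃ G : SimpleGraph (Fin (Δ + 4)),
      G.IsTotalDomCritical ∧ G.totalDomNum = 4 ∧ G.maxDegree = Δ ∧ 2 ≤ G.minDegree := by
  have hn : (Δ + 4) % 2 = 1 := by obtain ⟨k, rfl⟩ := hodd; omega
  have h13 : 13 ≤ Δ + 4 := by omega
  refine ⟨graph (Δ + 4), ⟨fun v => ?_, fun v _ => ?_⟩, totalDomNum_graph hn (by omega), ?_, ?_⟩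
  · exact two_pos.trans_le (two_le_degree_graph (by omega) v)
  · rw [totalDomNum_graph hn (by omega)]
    exact (totalDomNum_deleteVert_graph_le_three hn h13 v).trans_lt (by norm_num)
  · rw [maxDegree_graph hn (by omega)]
    omega
  · have : Nonempty (Fin (Δ + 4)) := ⟨0⟩
    exact le_minDegree_of_forall_le_degree _ _ (two_le_degree_graph (by omega))

end SimpleGraph
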